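/- Define B_c(B) = B ∖ (N_h(B) ∪ N_v(B)), where N_h(B) is the set of patterns x_{i,j} ∈ B whose index i is a zero column of H₂(B) or whose index j is a zero row of H₂(B), and N_v(B) analogously with V₂(B). Then B_c(B) equals the set of patterns b ∈ B that extend to a B-admissible pattern on the crisscross lattice Z₊. -/
import Mathlib


open scoped Classical

/-- A `2×2` pattern over `p` symbols; first argument is the horizontal
coordinate, second the vertical coordinate. -/
abbrev Pat (p : ℕ) := Fin 2 → Fin 2 → Fin p

/-- The `2×2` block of the configuration `W` with lower-left corner `v`. -/
def blk {p : ℕ} (W : ℤ × ℤ → Fin p) (v : ℤ × ℤ) : Pat p :=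
  fun a b => W (v.1 + (a : ℕ), v.2 + (b : ℕ))

/-- The `2×2` square lattice `Z_{2×2}(v)` with lower-left corner `v`. -/
def sqr (v : ℤ × ℤ) : Set (ℤ × ℤ) :=
  {x | ∃ a b : Fin 2, x = (v.1 + (a : ℕ), v.2 + (b : ℕ))}

/-- `U` is a `B`-admissible pattern on the region `R`: every `2×2` block fully
contained in `R` carries a pattern of `B`. -/
def AdmOn {p : ℕ} (B : Set (Pat p)) (R : Set (ℤ × ℤ)) (U : ℤ × ℤ → Fin p) : Prop :=
  ∀ v : ℤ × ℤ, sqr v ⊆ R → blk U v ∈ B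

/-- `W` is a global `B`-admissible configuration, i.e. `W ∈ Σ(B)`. -/
def Glob {p : ℕ} (B : Set (Pat p)) (W : ℤ × ℤ → Fin p) : Prop :=
  ∀ v : ℤ × ℤ, blk W v ∈ B

/-- The crisscross lattice `Z₊`. -/
def Zplus : Set (ℤ × ℤ) :=
  sqr (0, 0) ∪ sqr (1, 0) ∪ sqr (-1, 0) ∪ sqr (0, 1) ∪ sqr (0, -1)

/-- The rectangular lattice `Z_{m×n}(v)`. -/
def rect (m n : ℕ) (v : ℤ × ℤ) : Set (ℤ × ℤ) :=
  {x | ∃ a b : ℕ, a < m ∧ b < n ∧ x = (v.1 + a, v.2 + b)}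

/-- Euclidean distance between two lattice points of `ℤ²`. -/
noncomputable def eDist (x y : ℤ × ℤ) : ℝ :=
  Real.sqrt (((x.1 - y.1 : ℤ) : ℝ) ^ 2 + ((x.2 - y.2 : ℤ) : ℝ) ^ 2)

/-- The `2×2` pattern with left column `c` and right column `d`. -/
def patH {p : ℕ} (c d : Fin 2 → Fin p) : Pat p := fun a b => if a = 0 then c b else d b

/-- The `2×2` pattern with bottom row `r` and top row `s`. -/
def patV {p : ℕ} (r s : Fin 2 → Fin p) : Pat p := fun a b => if b = 0 then r a else s a

/-- `N_h(B)`: patterns of `B` whose left column is a zero column of `H₂(B)` or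
whose right column is a zero row of `H₂(B)`. -/
def Nh {p : ℕ} (B : Set (Pat p)) : Set (Pat p) :=
  {b ∈ B | (∀ c : Fin 2 → Fin p, patH c (fun k => b 0 k) ∉ B) ∨
           (∀ d : Fin 2 → Fin p, patH (fun k => b 1 k) d ∉ B)}

/-- `N_v(B)`: patterns of `B` whose bottom row is a zero column of `V₂(B)` or
whose top row is a zero row of `V₂(B)`. -/
def Nv {p : ℕ} (B : Set (Pat p)) : Set (Pat p) :=
  {b ∈ B | (∀ r : Fin 2 → Fin p, patV r (fun a => b a 0) ∉ B) ∨
           (∀ s : Fin 2 → Fin p, patV (fun a => b a 1) s ∉ B)}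

lemma mem_sqr {x y u w : ℤ} :
    ((x, y) ∈ sqr (u, w)) ↔ (u ≤ x ∧ x ≤ u + 1 ∧ w ≤ y ∧ y ≤ w + 1) := by
  constructor
  · rintro ⟨a, b, h⟩
    rw [Prod.ext_iff] at h
    obtain ⟨h1, h2⟩ := h
    fin_cases a <;> fin_cases b <;> simp_all <;> omega
  · rintro ⟨h1, h2, h3, h4⟩
    have hx : x = u ∨ x = u + 1 := by omega
    have hy : y = w ∨ y = w + 1 := by omega
    rcases hx with hx | hx <;> rcases hy with hy | hy
    · exact ⟨0, 0, by simp [hx, hy]⟩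
    · exact ⟨0, 1, by simp [hx, hy]⟩
    · exact ⟨1, 0, by simp [hx, hy]⟩
    · exact ⟨1, 1, by simp [hx, hy]⟩

lemma mem_Zplus {x y : ℤ} :
    ((x, y) ∈ Zplus) ↔
      ((-1 ≤ x ∧ x ≤ 2 ∧ 0 ≤ y ∧ y ≤ 1) ∨ (0 ≤ x ∧ x ≤ 1 ∧ -1 ≤ y ∧ y ≤ 2)) := by
  show ((x, y) ∈ (sqr (0,0) ∪ sqr (1,0) ∪ sqr (-1,0) ∪ sqr (0,1) ∪ sqr (0,-1))) ↔ _
  simp only [Set.mem_union, mem_sqr]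
  omega

lemma sqr_sub_Zplus {u w : ℤ}
    (h : (u = 0 ∧ w = 0) ∨ (u = 1 ∧ w = 0) ∨ (u = -1 ∧ w = 0) ∨
         (u = 0 ∧ w = 1) ∨ (u = 0 ∧ w = -1)) : sqr (u, w) ⊆ Zplus := by
  rintro ⟨x, y⟩ hx
  rw [mem_sqr] at hx
  rw [mem_Zplus]
  omega

/-- `B ∖ (N_h(B) ∪ N_v(B))` equals the set of patterns of `B` that extend to a
`B`-admissible pattern on the crisscross lattice `Z₊`. -/
theorem crissSubset_eq_diff {p : ℕ} (hp : 2 ≤ p) (B : Set (Pat p)) :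
    B \ (Nh B ∪ Nv B) =
      {b ∈ B | ∃ U : ℤ × ℤ → Fin p, AdmOn B Zplus U ∧ blk U (0, 0) = b} := by
  ext b
  simp only [Set.mem_diff, Set.mem_union, Set.mem_setOf_eq]
  constructor
  · rintro ⟨hbB, hN⟩
    push_neg at hN
    obtain ⟨hNh, hNv⟩ := hN
    have hh : ¬ ((∀ c : Fin 2 → Fin p, patH c (fun k => b 0 k) ∉ B) ∨
        (∀ d : Fin 2 → Fin p, patH (fun k => b 1 k) d ∉ B)) := fun h => hNh ⟨hbB, h⟩
    have hv : ¬ ((∀ r : Fin 2 → Fin p, patV r (fun a => b a 0) ∉ B) ∨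
        (∀ s : Fin 2 → Fin p, patV (fun a => b a 1) s ∉ B)) := fun h => hNv ⟨hbB, h⟩
    push_neg at hh hv
    obtain ⟨⟨c, hc⟩, ⟨d, hd⟩⟩ := hh
    obtain ⟨⟨r, hr⟩, ⟨s, hs⟩⟩ := hv
    refine ⟨hbB, ?_⟩
    set tf : ℤ → Fin 2 := fun z => if z = 0 then 0 else 1 with htf
    set U : ℤ × ℤ → Fin p := fun q =>
      if q.1 = -1 then c (tf q.2)
      else if q.1 = 2 then d (tf q.2)
      else if q.2 = -1 then r (tf q.1)
      else if q.2 = 2 then s (tf q.1)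
      else b (tf q.1) (tf q.2) with hUdef
    have hcenter : blk U (0, 0) = b := by
      funext a k
      fin_cases a <;> fin_cases k <;> simp [blk, hUdef, htf]
    have hleft : blk U (-1, 0) = patH c (fun k => b 0 k) := by
      funext a k
      fin_cases a <;> fin_cases k <;> simp [blk, hUdef, htf, patH]
    have hright : blk U (1, 0) = patH (fun k => b 1 k) d := by
      funext a k
      fin_cases a <;> fin_cases k <;> simp [blk, hUdef, htf, patH]
    have hdown : blk U (0, -1) = patV r (fun a => b a 0) := by
      funext a k
      fin_cases a <;> fin_cases k <;> simp [blk, hUdef, htf, patV]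
    have hup : blk U (0, 1) = patV (fun a => b a 1) s := by
      funext a k
      fin_cases a <;> fin_cases k <;> simp [blk, hUdef, htf, patV]
    refine ⟨U, ?_, hcenter⟩
    rintro ⟨u, w⟩ hsub
    have h00 : ((u, w) : ℤ × ℤ) ∈ Zplus := by
      apply hsub; rw [mem_sqr]; omega
    have h11 : ((u + 1, w + 1) : ℤ × ℤ) ∈ Zplus := by
      apply hsub; rw [mem_sqr]; omega
    have h10 : ((u + 1, w) : ℤ × ℤ) ∈ Zplus := by
      apply hsub; rw [mem_sqr]; omega
    have h01 : ((u, w + 1) : ℤ × ℤ) ∈ Zplus := by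
      apply hsub; rw [mem_sqr]; omega
    rw [mem_Zplus] at h00 h11 h10 h01
    have hcases : (u = 0 ∧ w = 0) ∨ (u = 1 ∧ w = 0) ∨ (u = -1 ∧ w = 0) ∨
        (u = 0 ∧ w = 1) ∨ (u = 0 ∧ w = -1) := by omega
    rcases hcases with ⟨hu, hw⟩ | ⟨hu, hw⟩ | ⟨hu, hw⟩ | ⟨hu, hw⟩ | ⟨hu, hw⟩ <;>
      subst hu <;> subst hw
    · rw [hcenter]; exact hbB
    · rw [hright]; exact hd
    · rw [hleft]; exact hc
    · rw [hup]; exact hs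
    · rw [hdown]; exact hr
  · rintro ⟨hbB, U, hU, hblk⟩
    subst hblk
    refine ⟨hbB, ?_⟩
    rintro (⟨-, h⟩ | ⟨-, h⟩)
    · rcases h with h | h
      · apply h (fun k => U (-1, k))
        have := hU (-1, 0) (sqr_sub_Zplus (by tauto))
        convert this using 1
        funext a k
        fin_cases a <;> fin_cases k <;> simp [blk, patH]
      · apply h (fun k => U (2, k))
        have := hU (1, 0) (sqr_sub_Zplus (by tauto))
        convert this using 1
        funext a k
        fin_cases a <;> fin_cases k <;> simp [blk, patH]
    · rcases h with h | h
      · apply h (fun a => U (a, -1))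
        have := hU (0, -1) (sqr_sub_Zplus (by tauto))
        convert this using 1
        funext a k
        fin_cases a <;> fin_cases k <;> simp [blk, patV]
      · apply h (fun a => U (a, 2))
        have := hU (0, 1) (sqr_sub_Zplus (by tauto))
        convert this using 1
        funext a k
        fin_cases a <;> fin_cases k <;> simp [blk, patV]
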